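/- arXiv:1112.5421 — 2 statements merged into one kernel-verified Lean document; each statement's English description precedes it below -/
import Mathlib

section
/- The map O ↦ (v ↦ indeg_O(v) - 1) restricts to a bijection from the set of acyclic orientations of G (partial orientations in which every edge of G is oriented and which contain no directed cycle) onto the set of maximal quasi-superstable divisors on G (divisors that are quasi-superstable and maximal with respect to the coordinatewise order among quasi-superstable divisors). -/
namespace Soap

variable {V : Type*} {W : Type*}

/-- A partial orientation of `G`: a relation `O` such that `O u v` implies `{u,v}` is an
edge and the reverse pair is not in `O`. -/
def IsPartialOrientation (G : SimpleGraph V) (O : V → V → Prop) : Prop :=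
  ∀ u v, O u v → G.Adj u v ∧ ¬ O v u

/-- The edge `{u,v}` of `G` is blank for the partial orientation `O`. -/
def IsBlank (G : SimpleGraph V) (O : V → V → Prop) (u v : V) : Prop :=
  G.Adj u v ∧ ¬ O u v ∧ ¬ O v u

/-- A `G`-semiorientation: a partial orientation such that every potential cycle
(a cycle of `G`, here traversed as `c : ZMod n → V`, none of whose edges is oriented
against the traversal) has strictly more blank edges than oriented edges. -/
def IsSemiorientation (G : SimpleGraph V) (O : V → V → Prop) : Prop :=
  IsPartialOrientation G O ∧
  ∀ (n : ℕ) (c : ZMod n → V), 3 ≤ n → Function.Injective c →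
    (∀ i, G.Adj (c i) (c (i + 1))) →
    (∀ i, ¬ O (c (i + 1)) (c i)) →
    {i : ZMod n | O (c i) (c (i + 1))}.ncard <
      {i : ZMod n | IsBlank G O (c i) (c (i + 1))}.ncard

/-- A semiorder (unit interval order) given by its strict order relation `lt`. -/
def IsSemiorder (lt : V → V → Prop) : Prop :=
  ∃ t : V → ℝ, ∀ u v, lt u v ↔ t u + 1 < t v

/-- Compatibility of a (semi)order `lt` and a partial orientation `O`:
for every edge `{u,v}`, `u < v` iff `(u,v) ∈ O`. -/
def Compatible (G : SimpleGraph V) (lt : V → V → Prop) (O : V → V → Prop) : Prop :=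
  ∀ u v, G.Adj u v → (lt u v ↔ O u v)

/-- Indegree of a vertex with respect to a partial orientation. -/
noncomputable def indeg (O : V → V → Prop) (v : V) : ℕ := {u | O u v}.ncard

/-- `n_P(v)`: the number of vertices `u` with `u < v` and `{u,v}` an edge of `G`. -/
noncomputable def nP (G : SimpleGraph V) (lt : V → V → Prop) (v : V) : ℕ :=
  {u | lt u v ∧ G.Adj u v}.ncard

/-- Degree of a vertex in a graph. -/
noncomputable def vdeg (H : SimpleGraph W) (v : W) : ℕ := {u | H.Adj v u}.ncard

/-- A configuration `c` on the graph `H` with sink `q` is superstable: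
`c ≥ 0` off the sink, and no nonempty set `X` of nonsink vertices can be fired legally,
i.e. `c - Δ̃·1_X ≥ 0` fails (coordinatewise off the sink), where
`(Δ̃·1_X)_v = deg(v)·1_X(v) - #{u ∈ X : u ∼ v}`. -/
def Superstable (H : SimpleGraph W) (q : W) (c : W → ℤ) : Prop :=
  (∀ v, v ≠ q → 0 ≤ c v) ∧
  ¬ ∃ X : Set W, X.Nonempty ∧ q ∉ X ∧
    ∀ v, v ≠ q →
      0 ≤ c v - X.indicator (fun u => (vdeg H u : ℤ)) v + ({u | u ∈ X ∧ H.Adj v u}.ncard : ℤ)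

/-- `K(G)`: the graph `G` with a new vertex `none` adjoined, joined to every vertex of `G`. -/
def KG (G : SimpleGraph V) : SimpleGraph (Option V) where
  Adj x y := x ≠ y ∧ ∀ u v, x = some u → y = some v → G.Adj u v
  symm := by
    refine ⟨?_⟩
    rintro x y ⟨hne, h⟩
    exact ⟨hne.symm, fun u v hu hv => (h v u hv hu).symm⟩
  loopless := by refine ⟨?_⟩; rintro x ⟨hne, -⟩; exact hne rfl

/-- A divisor `c : V → ℤ` on `G` is quasi-superstable if the configuration
`v ↦ c v + 1` on `K(G)` (with sink the new vertex) is superstable. -/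
def QuasiSuperstable (G : SimpleGraph V) (c : V → ℤ) : Prop :=
  Superstable (KG G) none (fun x => x.elim 0 (fun v => c v + 1))

/-- An acyclic orientation of `G`: a partial orientation in which every edge is
oriented and which contains no directed cycle. -/
def IsAcyclicOrientation (G : SimpleGraph V) (O : V → V → Prop) : Prop :=
  IsPartialOrientation G O ∧ (∀ u v, G.Adj u v → O u v ∨ O v u) ∧
  ¬ ∃ (n : ℕ) (c : ZMod n → V), 0 < n ∧ Function.Injective c ∧ ∀ i, O (c i) (c (i + 1))

/-- The union of the hyperplanes `x u - x v = 1` of the `G`-semiorder arrangement. -/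
def hyperplanesUnion (G : SimpleGraph V) : Set (V → ℝ) :=
  {x | ∃ u v, G.Adj u v ∧ x u - x v = 1}

/-- The regions of the `G`-semiorder arrangement: connected components of the
complement of the union of its hyperplanes. -/
def Regions (G : SimpleGraph V) : Set (Set (V → ℝ)) :=
  {r | ∃ x, x ∉ hyperplanesUnion G ∧ r = connectedComponentIn (hyperplanesUnion G)ᶜ x}

/-- The candidate region attached to a partial orientation `O`. -/
def rho (G : SimpleGraph V) (O : V → V → Prop) : Set (V → ℝ) :=
  {x | (∀ u v, O u v → x v - x u > 1) ∧ (∀ u v, IsBlank G O u v → |x u - x v| < 1)}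

/-- `K(G)₀`: the graph `G` with an edge `{v, v₀}` added for each vertex `v ≠ v₀`
not already adjacent to `v₀`. -/
def KG0 (G : SimpleGraph V) (v₀ : V) : SimpleGraph V where
  Adj u v := G.Adj u v ∨ (u ≠ v ∧ (u = v₀ ∨ v = v₀))
  symm := by
    refine ⟨?_⟩
    rintro u v (h | ⟨hne, h⟩)
    · exact Or.inl h.symm
    · exact Or.inr ⟨hne.symm, h.symm⟩
  loopless := by
    refine ⟨?_⟩
    rintro v (h | ⟨hne, -⟩)
    · exact G.irrefl h
    · exact hne rfl

/-- The union of the hyperplanes of the `(G,v₀)`-semiorder arrangement. -/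
def hyperplanesUnion0 (G : SimpleGraph V) (v₀ : V) : Set ({v : V // v ≠ v₀} → ℝ) :=
  {x | ∃ u v : {v : V // v ≠ v₀}, G.Adj u.1 v.1 ∧ x u - x v = 1}

/-- The regions of the `(G,v₀)`-semiorder arrangement. -/
def Regions0 (G : SimpleGraph V) (v₀ : V) : Set (Set ({v : V // v ≠ v₀} → ℝ)) :=
  {r | ∃ x, x ∉ hyperplanesUnion0 G v₀ ∧
    r = connectedComponentIn (hyperplanesUnion0 G v₀)ᶜ x}

/-- The candidate region attached to a partial orientation `O`, in the sink context. -/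
def rho0 (G : SimpleGraph V) (v₀ : V) (O : V → V → Prop) :
    Set ({v : V // v ≠ v₀} → ℝ) :=
  {x | (∀ u v : {v : V // v ≠ v₀}, O u.1 v.1 → x v - x u > 1) ∧
    (∀ u v : {v : V // v ≠ v₀}, IsBlank G O u.1 v.1 → |x u - x v| < 1)}

lemma cycle_of_succ [Finite V] (R : V → V → Prop) (X : Set V) (hne : X.Nonempty)
    (h : ∀ v ∈ X, ∃ u ∈ X, R v u) :
    ∃ (n : ℕ) (c : ZMod n → V), 0 < n ∧ Function.Injective c ∧ ∀ i, R (c i) (c (i + 1)) := by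
  classical
  -- successor function on the subtype
  have hsucc : ∀ v : X, ∃ u : X, R v u := by
    rintro ⟨v, hv⟩
    obtain ⟨u, hu, hru⟩ := h v hv
    exact ⟨⟨u, hu⟩, hru⟩
  choose succ hR using hsucc
  obtain ⟨x0, hx0⟩ := hne
  let g : ℕ → X := fun n => Nat.rec ⟨x0, hx0⟩ (fun _ v => succ v) n
  have hgs : ∀ n, g (n + 1) = succ (g n) := fun n => rfl
  have hg : ∀ n, R (g n).1 (g (n + 1)).1 := fun n => by rw [hgs]; exact hR (g n)
  -- find a repeat
  obtain ⟨a, b, hab, heq⟩ := Finite.exists_ne_map_eq_of_infinite g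
  have hrep : ∃ d, 0 < d ∧ ∃ i, g (i + d) = g i := by
    rcases Nat.lt_or_ge a b with hl | hg'
    · exact ⟨b - a, by omega, a, by rw [Nat.add_sub_cancel' hl.le]; exact heq.symm⟩
    · have hl : b < a := by omega
      exact ⟨a - b, by omega, b, by rw [Nat.add_sub_cancel' hl.le]; exact heq⟩
  letI : DecidablePred fun d => 0 < d ∧ ∃ i, g (i + d) = g i := Classical.decPred _
  let d₀ := Nat.find hrep
  have hd₀ : 0 < d₀ ∧ ∃ i, g (i + d₀) = g i := Nat.find_spec hrep
  obtain ⟨hd₀pos, i₀, hi₀⟩ := hd₀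
  have hmin : ∀ d, 0 < d → d < d₀ → ∀ i, g (i + d) ≠ g i := by
    intro d hdpos hdlt i hgi
    exact Nat.find_min hrep hdlt ⟨hdpos, i, hgi⟩
  refine ⟨d₀, fun k => (g (i₀ + k.val)).1, hd₀pos, ?_, ?_⟩
  · have : NeZero d₀ := ⟨hd₀pos.ne'⟩
    intro k k' hkk'
    have hgeq : g (i₀ + k.val) = g (i₀ + k'.val) := Subtype.ext hkk'
    by_contra hne'
    have hvne : k.val ≠ k'.val := fun hv => hne' (ZMod.val_injective _ hv)
    rcases Nat.lt_or_ge k.val k'.val with hl | hg'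
    · exact hmin (k'.val - k.val) (by omega) (by have := k'.val_lt; omega)
        (i₀ + k.val) (by rw [show i₀ + k.val + (k'.val - k.val) = i₀ + k'.val by omega]; exact hgeq.symm)
    · have hl : k'.val < k.val := by omega
      exact hmin (k.val - k'.val) (by omega) (by have := k.val_lt; omega)
        (i₀ + k'.val) (by rw [show i₀ + k'.val + (k.val - k'.val) = i₀ + k.val by omega]; exact hgeq)
  · have : NeZero d₀ := ⟨hd₀pos.ne'⟩
    intro k
    have hkey : (g (i₀ + (k + 1).val)).1 = (g (i₀ + k.val + 1)).1 := by
      rcases Nat.lt_or_ge (k.val + 1) d₀ with hl | hge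
      · have : (k + 1).val = k.val + 1 := by
          have h1 : (k + 1 : ZMod d₀) = ((k.val + 1 : ℕ) : ZMod d₀) := by
            push_cast [ZMod.natCast_val, ZMod.cast_id]; ring
          rw [h1, ZMod.val_cast_of_lt hl]
        rw [this, Nat.add_assoc]
      · have hkv : k.val + 1 = d₀ := by have := k.val_lt; omega
        have : (k + 1 : ZMod d₀) = 0 := by
          have h1 : (k + 1 : ZMod d₀) = ((k.val + 1 : ℕ) : ZMod d₀) := by
            push_cast [ZMod.natCast_val, ZMod.cast_id]; ring
          rw [h1, hkv, ZMod.natCast_self]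
        rw [this, ZMod.val_zero]
        have : g (i₀ + k.val + 1) = g i₀ := by
          rw [show i₀ + k.val + 1 = i₀ + d₀ by omega]; exact hi₀
        rw [this]
        simp
    show R (g (i₀ + k.val)).1 (g (i₀ + (k + 1).val)).1
    rw [hkey]
    exact hg (i₀ + k.val)

lemma adj_KG_some_some (G : SimpleGraph V) (u v : V) :
    (KG G).Adj (some u) (some v) ↔ G.Adj u v := by
  constructor
  · rintro ⟨-, h⟩; exact h u v rfl rfl
  · intro h
    refine ⟨by simpa using h.ne, fun a b ha hb => ?_⟩
    rw [Option.some_inj] at ha hb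
    rwa [← ha, ← hb]


lemma adj_KG_some_none (G : SimpleGraph V) (v : V) : (KG G).Adj (some v) none :=
  ⟨by simp, fun a b _ hb => by cases hb⟩


lemma vdeg_KG [Fintype V] (G : SimpleGraph V) (v : V) :
    vdeg (KG G) (some v) = vdeg G v + 1 := by
  have hset : {x : Option V | (KG G).Adj (some v) x} =
      insert none (some '' {u | G.Adj v u}) := by
    ext x
    cases x with
    | none => simp [adj_KG_some_none]
    | some w => simp [adj_KG_some_some]
  rw [vdeg, hset, Set.ncard_insert_of_notMem (by simp),
    Set.ncard_image_of_injective _ (Option.some_injective V)]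
  rfl


lemma nbrs_in_X [Fintype V] (G : SimpleGraph V) (X : Set (Option V)) (hX : none ∉ X) (v : V) :
    {u : Option V | u ∈ X ∧ (KG G).Adj (some v) u} = some '' {w | some w ∈ X ∧ G.Adj v w} := by
  ext x
  cases x with
  | none => simp [fun h => hX h]
  | some w => simp [adj_KG_some_some]


lemma deg_split [Fintype V] (G : SimpleGraph V) (Y : Set V) (v : V) :
    (vdeg G v : ℤ) = ({w | w ∈ Y ∧ G.Adj v w}.ncard : ℤ) + ({u | u ∉ Y ∧ G.Adj v u}.ncard : ℤ) := by
  have : {u | G.Adj v u} = {w | w ∈ Y ∧ G.Adj v w} ∪ {u | u ∉ Y ∧ G.Adj v u} := by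
    ext u; by_cases hu : u ∈ Y <;> simp [hu]
  rw [vdeg, this, Set.ncard_union_eq ?_ (Set.toFinite _) (Set.toFinite _)]
  · push_cast; ring
  · rw [Set.disjoint_left]; rintro u ⟨hu, -⟩ ⟨hu', -⟩; exact hu' hu


lemma qs_iff [Fintype V] (G : SimpleGraph V) (c : V → ℤ) :
    QuasiSuperstable G c ↔
      ((∀ v, -1 ≤ c v) ∧ ∀ Y : Set V, Y.Nonempty →
        ∃ v ∈ Y, c v < ({u | u ∉ Y ∧ G.Adj v u}.ncard : ℤ)) := by
  rw [QuasiSuperstable, Superstable]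
  constructor
  · rintro ⟨h1, h2⟩
    have hlb : ∀ v, -1 ≤ c v := by
      intro v
      have h := h1 (some v) (by simp)
      simp only [Option.elim_some] at h
      linarith
    refine ⟨hlb, ?_⟩
    intro Y hY
    by_contra hcon
    push_neg at hcon
    apply h2
    refine ⟨some '' Y, hY.image _, by simp, ?_⟩
    rintro x hx
    match x with
    | none => exact absurd rfl hx
    | some v =>
      have hnone : none ∉ (some '' Y : Set (Option V)) := by simp
      rw [nbrs_in_X G _ hnone v]
      rw [Set.ncard_image_of_injective _ (Option.some_injective V)]
      have hYset : {w | some w ∈ (some '' Y : Set (Option V)) ∧ G.Adj v w} = {w | w ∈ Y ∧ G.Adj v w} := by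
        ext w; simp [Option.some_injective V |>.mem_set_image]
      by_cases hv : v ∈ Y
      · rw [Set.indicator_of_mem (by exact ⟨v, hv, rfl⟩), vdeg_KG]
        have hb := hcon v hv
        have hd := deg_split G Y v
        simp only [Option.elim_some] at *
        rw [hYset]
        push_cast
        linarith
      · rw [Set.indicator_of_notMem (by simpa using hv)]
        have := hlb v
        simp only [Option.elim_some]
        have : (0:ℤ) ≤ ({w | some w ∈ (some '' Y : Set (Option V)) ∧ G.Adj v w}.ncard : ℤ) := by positivity
        linarith [hlb v]
  · rintro ⟨h1, h2⟩
    constructor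
    · rintro x hx
      match x with
      | none => exact absurd rfl hx
      | some v => simpa using by linarith [h1 v]
    · rintro ⟨X, hXne, hXq, hX⟩
      set Y : Set V := {w | some w ∈ X} with hYdef
      have hYne : Y.Nonempty := by
        obtain ⟨x, hx⟩ := hXne
        match x with
        | none => exact absurd hx hXq
        | some w => exact ⟨w, hx⟩
      obtain ⟨v, hv, hlt⟩ := h2 Y hYne
      have := hX (some v) (by simp)
      rw [nbrs_in_X G X hXq v, Set.ncard_image_of_injective _ (Option.some_injective V),
        Set.indicator_of_mem (by exact hv), vdeg_KG] at this
      have hd := deg_split G Y v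
      simp only [Option.elim_some] at this
      have hYs : {w | some w ∈ X ∧ G.Adj v w} = {w | w ∈ Y ∧ G.Adj v w} := rfl
      rw [hYs] at this
      have : c v ≥ ({u | u ∉ Y ∧ G.Adj v u}.ncard : ℤ) := by push_cast at this ⊢; linarith
      linarith

lemma exists_list [Fintype V] [DecidableEq V] {G : SimpleGraph V} {c : V → ℤ}
    (h : ∀ Y : Set V, Y.Nonempty → ∃ v ∈ Y, c v < ({u | u ∉ Y ∧ G.Adj v u}.ncard : ℤ))
    (S : Finset V) :
    ∃ l : List V, l.Nodup ∧ (∀ v, v ∈ l ↔ v ∈ S) ∧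
      ∀ v ∈ S, c v + 1 ≤
        ({u | G.Adj u v ∧ (u ∉ S ∨ l.idxOf u < l.idxOf v)}.ncard : ℤ) := by
  induction S using Finset.strongInduction with
  | _ S ih =>
    rcases S.eq_empty_or_nonempty with rfl | hS
    · exact ⟨[], List.nodup_nil, by simp, by simp⟩
    · obtain ⟨v₀, hv₀S, hv₀⟩ := h ↑S (by exact_mod_cast hS)
      obtain ⟨l', hnd', hmem', hbound'⟩ := ih (S.erase v₀) (Finset.erase_ssubset hv₀S)
      refine ⟨v₀ :: l', ?_, ?_, ?_⟩
      · exact List.nodup_cons.2 ⟨fun hm => by simp [hmem' v₀] at hm, hnd'⟩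
      · intro v
        simp only [List.mem_cons, hmem', Finset.mem_erase]
        constructor
        · rintro (rfl | ⟨-, hv⟩)
          · exact hv₀S
          · exact hv
        · intro hv
          by_cases hvv : v = v₀
          · exact Or.inl hvv
          · exact Or.inr ⟨hvv, hv⟩
      · intro v hv
        by_cases hvv : v = v₀
        · subst hvv
          refine le_trans (show c v + 1 ≤ ({u | u ∉ (↑S : Set V) ∧ G.Adj v u}.ncard : ℤ) by linarith [hv₀]) ?_
          have hsub : {u | u ∉ (↑S : Set V) ∧ G.Adj v u} ⊆
              {u | G.Adj u v ∧ (u ∉ S ∨ (v :: l').idxOf u < (v :: l').idxOf v)} := by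
            rintro u ⟨hu, hadj⟩
            exact ⟨hadj.symm, Or.inl (by exact_mod_cast hu)⟩
          exact_mod_cast Set.ncard_le_ncard hsub (Set.toFinite _)
        · have hvS' : v ∈ S.erase v₀ := Finset.mem_erase.2 ⟨hvv, hv⟩
          refine le_trans (hbound' v hvS') ?_
          have hvl' : v ∈ l' := (hmem' v).2 hvS'
          have hidxv : (v₀ :: l').idxOf v = l'.idxOf v + 1 := List.idxOf_cons_ne _ (by exact fun h => hvv h.symm)
          have hsub : {u | G.Adj u v ∧ (u ∉ S.erase v₀ ∨ l'.idxOf u < l'.idxOf v)} ⊆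
              {u | G.Adj u v ∧ (u ∉ S ∨ (v₀ :: l').idxOf u < (v₀ :: l').idxOf v)} := by
            rintro u ⟨hadj, hcase⟩
            refine ⟨hadj, ?_⟩
            by_cases huv₀ : u = v₀
            · subst huv₀
              refine Or.inr ?_
              rw [List.idxOf_cons_self, hidxv]
              omega
            · have hidxu : (v₀ :: l').idxOf u = l'.idxOf u + 1 := List.idxOf_cons_ne _ (by exact fun h => huv₀ h.symm)
              rcases hcase with hu | hu
              · exact Or.inl (fun huS => hu (Finset.mem_erase.2 ⟨huv₀, huS⟩))
              · exact Or.inr (by rw [hidxu, hidxv]; omega)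
          exact_mod_cast Set.ncard_le_ncard hsub (Set.toFinite _)


lemma exists_ordering [Fintype V] {G : SimpleGraph V} {c : V → ℤ}
    (h : ∀ Y : Set V, Y.Nonempty → ∃ v ∈ Y, c v < ({u | u ∉ Y ∧ G.Adj v u}.ncard : ℤ)) :
    ∃ f : V → ℕ, Function.Injective f ∧
      ∀ v, c v + 1 ≤ ({u | G.Adj u v ∧ f u < f v}.ncard : ℤ) := by
  classical
  obtain ⟨l, hnd, hmem, hbound⟩ := exists_list h Finset.univ
  refine ⟨fun v => l.idxOf v, ?_, ?_⟩
  · intro u v huv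
    have hu : u ∈ l := (hmem u).2 (Finset.mem_univ u)
    have hv : v ∈ l := (hmem v).2 (Finset.mem_univ v)
    exact (List.idxOf_inj hu).1 huv
  · intro v
    have := hbound v (Finset.mem_univ v)
    simpa using this

lemma acyclic_of_inj {G : SimpleGraph V} {f : V → ℕ} (hf : Function.Injective f) :
    IsAcyclicOrientation G (fun u v => G.Adj u v ∧ f u < f v) := by
  refine ⟨fun u v h => ⟨h.1, fun h' => absurd h'.2 (by omega)⟩, ?_, ?_⟩
  · intro u v hadj
    rcases Nat.lt_or_ge (f u) (f v) with hl | hge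
    · exact Or.inl ⟨hadj, hl⟩
    · have : f u ≠ f v := fun h => hadj.ne (hf h)
      exact Or.inr ⟨hadj.symm, by omega⟩
  · rintro ⟨n, cc, hn, hinj, hcyc⟩
    have key : ∀ k : ℕ, f (cc 0) < f (cc ((k + 1 : ℕ) : ZMod n)) := by
      intro k
      induction k with
      | zero =>
        have := (hcyc 0).2
        simpa using this
      | succ k ihk =>
        have h2 := (hcyc ((k + 1 : ℕ) : ZMod n)).2
        have hcast : ((k + 1 : ℕ) : ZMod n) + 1 = ((k + 1 + 1 : ℕ) : ZMod n) := by push_cast; ring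
        rw [hcast] at h2
        exact lt_trans ihk h2
    have hfin := key (n - 1)
    rw [show (n - 1 + 1 : ℕ) = n by omega, ZMod.natCast_self] at hfin
    exact lt_irrefl _ hfin


lemma exists_source [Finite V] {G : SimpleGraph V} {O : V → V → Prop}
    (hO : IsAcyclicOrientation G O) (X : Set V) (hne : X.Nonempty) :
    ∃ v ∈ X, ∀ u ∈ X, ¬ O u v := by
  by_contra hcon
  push_neg at hcon
  have h : ∀ v ∈ X, ∃ u ∈ X, (fun a b => O b a) v u := by
    intro v hv
    obtain ⟨u, hu, hOu⟩ := hcon v hv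
    exact ⟨u, hu, hOu⟩
  obtain ⟨n, cc, hn, hinj, hcyc⟩ := cycle_of_succ (fun a b => O b a) X hne h
  refine hO.2.2 ⟨n, fun i => cc (-i), hn, hinj.comp neg_injective, ?_⟩
  intro i
  have := hcyc (-(i + 1))
  simpa [show -(i + 1) + 1 = -i by ring] using this


lemma qs_aux_of_acyclic [Fintype V] {G : SimpleGraph V} {O : V → V → Prop}
    (hO : IsAcyclicOrientation G O) (Y : Set V) (hY : Y.Nonempty) :
    ∃ v ∈ Y, (indeg O v : ℤ) - 1 < ({u | u ∉ Y ∧ G.Adj v u}.ncard : ℤ) := by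
  obtain ⟨v, hv, hsrc⟩ := exists_source hO Y hY
  refine ⟨v, hv, ?_⟩
  have hsub : {u | O u v} ⊆ {u | u ∉ Y ∧ G.Adj v u} := by
    rintro u hu
    exact ⟨fun huY => hsrc u huY hu, (hO.1 u v hu).1.symm⟩
  have := Set.ncard_le_ncard hsub (Set.toFinite _)
  rw [indeg]
  have h2 : ({u | O u v}.ncard : ℤ) ≤ ({u | u ∉ Y ∧ G.Adj v u}.ncard : ℤ) := by exact_mod_cast this
  linarith

lemma sum_indeg_eq [Fintype V] {G : SimpleGraph V} {O₁ O₂ : V → V → Prop}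
    (h₁ : IsPartialOrientation G O₁) (t₁ : ∀ u v, G.Adj u v → O₁ u v ∨ O₁ v u)
    (h₂ : IsPartialOrientation G O₂) (t₂ : ∀ u v, G.Adj u v → O₂ u v ∨ O₂ v u) :
    ∑ v, indeg O₁ v = ∑ v, indeg O₂ v := by
  classical
  have key : ∀ (O : V → V → Prop), IsPartialOrientation G O →
      (∀ u v, G.Adj u v → O u v ∨ O v u) →
      2 * ∑ v, indeg O v = (Finset.univ.filter (fun p : V × V => G.Adj p.1 p.2)).card := by
    intro O hO ht
    have h1 : ∀ v, indeg O v = (Finset.univ.filter (fun u => O u v)).card := by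
      intro v; rw [indeg, Set.ncard_eq_toFinset_card']; congr 1; ext u; simp
    have h2 : ∑ v, indeg O v = (Finset.univ.filter (fun p : V × V => O p.1 p.2)).card := by
      rw [Finset.card_eq_sum_card_fiberwise
        (f := fun p : V × V => p.2) (t := Finset.univ) (fun x _ => Finset.mem_univ _)]
      refine Finset.sum_congr rfl fun v _ => ?_
      rw [h1]
      refine Finset.card_bij (fun u _ => (u, v)) ?_ ?_ ?_
      · intro u hu
        simp only [Finset.mem_filter, Finset.mem_univ, true_and] at hu ⊢
        simp [hu]
      · intro a _ b _ hab
        simpa using congrArg Prod.fst hab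
      · intro p hp
        simp only [Finset.mem_filter, Finset.mem_univ, true_and] at hp
        obtain ⟨hOp, hv⟩ := hp
        refine ⟨p.1, ?_, ?_⟩
        · simp only [Finset.mem_filter, Finset.mem_univ, true_and]
          rwa [hv] at hOp
        · subst hv; rfl
    have h3 : (Finset.univ.filter fun p : V × V => G.Adj p.1 p.2)
        = (Finset.univ.filter fun p : V × V => O p.1 p.2)
          ∪ (Finset.univ.filter fun p : V × V => O p.2 p.1) := by
      rw [← Finset.filter_or]
      refine Finset.filter_congr fun p _ => ?_
      constructor
      · intro h; exact ht _ _ h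
      · rintro (h | h)
        · exact (hO _ _ h).1
        · exact (hO _ _ h).1.symm
    have h4 : Disjoint (Finset.univ.filter fun p : V × V => O p.1 p.2)
        (Finset.univ.filter fun p : V × V => O p.2 p.1) := by
      rw [Finset.disjoint_left]
      intro p hp hp'
      simp only [Finset.mem_filter, Finset.mem_univ, true_and] at hp hp'
      exact (hO _ _ hp).2 hp'
    have h5 : (Finset.univ.filter fun p : V × V => O p.2 p.1).card
        = (Finset.univ.filter fun p : V × V => O p.1 p.2).card := by
      refine Finset.card_bij' (fun p _ => p.swap) (fun p _ => p.swap) ?_ ?_ ?_ ?_ <;>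
        simp
    rw [h2, h3, Finset.card_union_of_disjoint h4, h5]
    ring
  have k1 := key O₁ h₁ t₁
  have k2 := key O₂ h₂ t₂
  omega

/-- The map `O ↦ (v ↦ indeg_O v - 1)` restricts to a bijection from the acyclic
orientations of `G` onto the maximal quasi-superstable divisors on `G` (maximal
with respect to the coordinatewise order among quasi-superstable divisors). -/
theorem stmt10 {V : Type*} [Fintype V] (G : SimpleGraph V) (hconn : G.Connected) :
    Set.BijOn (fun (O : V → V → Prop) (v : V) => (indeg O v : ℤ) - 1)
      {O : V → V → Prop | IsAcyclicOrientation G O}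
      {c : V → ℤ | QuasiSuperstable G c ∧
        ∀ c' : V → ℤ, QuasiSuperstable G c' → (∀ v, c v ≤ c' v) → c' = c} := by
  classical
  refine ⟨?_, ?_, ?_⟩
  · -- MapsTo
    intro O hO
    simp only [Set.mem_setOf_eq] at hO ⊢
    refine ⟨?_, ?_⟩
    · rw [qs_iff]
      refine ⟨fun v => ?_, fun Y hY => qs_aux_of_acyclic hO Y hY⟩
      have : (0:ℤ) ≤ (indeg O v : ℤ) := Int.natCast_nonneg _
      linarith
    · intro c' hc' hle
      obtain ⟨h1', h2'⟩ := (qs_iff G c').1 hc'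
      obtain ⟨f, hf, hb⟩ := exists_ordering h2'
      have hO''ac := acyclic_of_inj (G := G) hf
      set O'' : V → V → Prop := fun u v => G.Adj u v ∧ f u < f v with hO''def
      have hle2 : ∀ v, (indeg O v : ℤ) ≤ c' v + 1 := by
        intro v
        have := hle v
        linarith
      have hle3 : ∀ v, c' v + 1 ≤ (indeg O'' v : ℤ) := fun v => hb v
      have hsum := sum_indeg_eq hO.1 hO.2.1 hO''ac.1 hO''ac.2.1 (O₂ := O'')
      have hsumZ : ∑ v, (indeg O v : ℤ) = ∑ v, (indeg O'' v : ℤ) := by exact_mod_cast hsum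
      have hmono : ∀ v ∈ Finset.univ, (indeg O v : ℤ) ≤ (indeg O'' v : ℤ) :=
        fun v _ => le_trans (hle2 v) (hle3 v)
      have hpt := (Finset.sum_eq_sum_iff_of_le hmono).1 hsumZ
      funext v
      have h1 := hpt v (Finset.mem_univ v)
      have h2 := hle2 v
      have h3 := hle3 v
      show c' v = (indeg O v : ℤ) - 1
      linarith
  · -- InjOn
    intro O₁ h₁ O₂ h₂ heq
    simp only [Set.mem_setOf_eq] at h₁ h₂
    have hind : ∀ v, indeg O₁ v = indeg O₂ v := by
      intro v
      have := congrFun heq v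
      simp only [sub_left_inj] at this
      exact_mod_cast this
    have key : ∀ (A B : V → V → Prop), IsAcyclicOrientation G A → IsAcyclicOrientation G B →
        (∀ v, indeg A v = indeg B v) → ∀ u v, A u v → B u v := by
      intro A B hA hB hiAB
      by_contra hcon
      push_neg at hcon
      obtain ⟨u₀, v₀, hA0, hB0⟩ := hcon
      set X : Set V := {v | ∃ u, A u v ∧ B v u} with hXdef
      have hv₀X : v₀ ∈ X := by
        refine ⟨u₀, hA0, ?_⟩
        rcases hB.2.1 u₀ v₀ (hA.1 _ _ hA0).1 with h | h
        · exact absurd h hB0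
        · exact h
      have hstep : ∀ v ∈ X, ∃ u ∈ X, A v u := by
        rintro v ⟨u₀', hAu, hBu⟩
        have hc : {u | A u v}.ncard = {u | B u v}.ncard := by
          have := hiAB v
          rwa [indeg, indeg] at this
        have hne : ∃ u₁, B u₁ v ∧ ¬ A u₁ v := by
          by_contra hcc
          push_neg at hcc
          have hsub : {u | B u v} ⊆ {u | A u v} := fun x hx => hcc x hx
          have hss : {u | B u v} ⊂ {u | A u v} := by
            rw [Set.ssubset_iff_of_subset hsub]
            exact ⟨u₀', hAu, (hB.1 v u₀' hBu).2⟩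
          have := Set.ncard_lt_ncard hss (Set.toFinite _)
          omega
        obtain ⟨u₁, hBu₁, hAu₁⟩ := hne
        have hAvu₁ : A v u₁ := by
          rcases hA.2.1 u₁ v (hB.1 _ _ hBu₁).1 with h | h
          · exact absurd h hAu₁
          · exact h
        exact ⟨u₁, ⟨v, hAvu₁, hBu₁⟩, hAvu₁⟩
      obtain ⟨n, cc, hn, hinj, hcyc⟩ := cycle_of_succ A X ⟨v₀, hv₀X⟩ hstep
      exact hA.2.2 ⟨n, cc, hn, hinj, hcyc⟩
    funext u v
    exact propext ⟨key O₁ O₂ h₁ h₂ hind u v, key O₂ O₁ h₂ h₁ (fun w => (hind w).symm) u v⟩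
  · -- SurjOn
    intro c hc
    simp only [Set.mem_setOf_eq] at hc
    obtain ⟨hqs, hmax⟩ := hc
    obtain ⟨h1, h2⟩ := (qs_iff G c).1 hqs
    obtain ⟨f, hf, hb⟩ := exists_ordering h2
    have hOac := acyclic_of_inj (G := G) hf
    set O : V → V → Prop := fun u v => G.Adj u v ∧ f u < f v with hOdef
    have hcO_qs : QuasiSuperstable G (fun v => (indeg O v : ℤ) - 1) := by
      rw [qs_iff]
      refine ⟨fun v => ?_, fun Y hY => qs_aux_of_acyclic hOac Y hY⟩
      have : (0:ℤ) ≤ (indeg O v : ℤ) := Int.natCast_nonneg _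
      linarith
    have hle : ∀ v, c v ≤ (indeg O v : ℤ) - 1 := by
      intro v
      have h := hb v
      have : (indeg O v : ℤ) = ({u | G.Adj u v ∧ f u < f v}.ncard : ℤ) := rfl
      linarith
    have heq := hmax _ hcO_qs hle
    exact ⟨O, hOac, heq⟩

end Soap
end

section
/- If O and O' are acyclic orientations of G (partial orientations in which every edge of G is oriented and which contain no directed cycle) such that indeg_O(v) = indeg_{O'}(v) for every vertex v, then O = O'; that is, an acyclic orientation of G is determined by its indegree sequence. -/
namespace Soap

variable {V : Type*} {W : Type*}

/-- An acyclic orientation of `G` is determined by its indegree sequence: if `O`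
and `O'` are acyclic orientations with `indeg_O v = indeg_{O'} v` for all `v`,
then `O = O'`. -/
theorem stmt12 {V : Type*} [Fintype V] (G : SimpleGraph V) (hconn : G.Connected)
    (O O' : V → V → Prop) (hO : IsAcyclicOrientation G O)
    (hO' : IsAcyclicOrientation G O') (h : ∀ v, indeg O v = indeg O' v) :
    O = O' := by
  classical
  obtain ⟨hPO, hTot, hAcyc⟩ := hO
  obtain ⟨hPO', hTot', -⟩ := hO'
  have hcard : ∀ v, {u | O u v ∧ O' v u}.ncard = {u | O v u ∧ O' u v}.ncard := by
    intro v
    have h1 : {u | O u v} = {u | O u v ∧ O' u v} ∪ {u | O u v ∧ O' v u} := by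
      ext u
      simp only [Set.mem_setOf_eq, Set.mem_union]
      constructor
      · intro hu
        rcases hTot' u v (hPO u v hu).1 with h' | h'
        · exact Or.inl ⟨hu, h'⟩
        · exact Or.inr ⟨hu, h'⟩
      · rintro (⟨hu, -⟩ | ⟨hu, -⟩) <;> exact hu
    have h2 : {u | O' u v} = {u | O u v ∧ O' u v} ∪ {u | O v u ∧ O' u v} := by
      ext u
      simp only [Set.mem_setOf_eq, Set.mem_union]
      constructor
      · intro hu
        rcases hTot u v (hPO' u v hu).1 with h' | h'
        · exact Or.inl ⟨h', hu⟩
        · exact Or.inr ⟨h', hu⟩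
      · rintro (⟨-, hu⟩ | ⟨-, hu⟩) <;> exact hu
    have hd1 : Disjoint {u | O u v ∧ O' u v} {u | O u v ∧ O' v u} := by
      rw [Set.disjoint_left]
      rintro u ⟨-, h'⟩ ⟨-, h''⟩
      exact (hPO' u v h').2 h''
    have hd2 : Disjoint {u | O u v ∧ O' u v} {u | O v u ∧ O' u v} := by
      rw [Set.disjoint_left]
      rintro u ⟨h', -⟩ ⟨h'', -⟩
      exact (hPO u v h').2 h''
    have e1 := h v
    rw [indeg, indeg, h1, h2, Set.ncard_union_eq hd1 (Set.toFinite _) (Set.toFinite _),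
      Set.ncard_union_eq hd2 (Set.toFinite _) (Set.toFinite _)] at e1
    omega
  have hnoR : ∀ a b, ¬ (O a b ∧ O' b a) := by
    intro a b hab
    have hsucc : ∀ v : V, (∃ u, O u v ∧ O' v u) → ∃ w, O v w ∧ O' w v := by
      intro v hv
      have h1 : (0 : ℕ) < {u | O u v ∧ O' v u}.ncard :=
        (Set.ncard_pos (Set.toFinite _)).2 hv
      rw [hcard v] at h1
      exact (Set.ncard_pos (Set.toFinite _)).1 h1
    have hstep : ∀ x : {v : V // ∃ u, O u v ∧ O' v u},
        ∃ y : {v : V // ∃ u, O u v ∧ O' v u}, O x.1 y.1 ∧ O' y.1 x.1 := by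
      rintro ⟨v, hv⟩
      obtain ⟨w, hw⟩ := hsucc v hv
      exact ⟨⟨w, v, hw⟩, hw⟩
    obtain ⟨g, hg⟩ := Classical.axiomOfChoice hstep
    set f : ℕ → {v : V // ∃ u, O u v ∧ O' v u} := fun n => g^[n] ⟨b, a, hab⟩ with hfdef
    have hf : ∀ n, O (f n).1 (f (n+1)).1 ∧ O' (f (n+1)).1 (f n).1 := by
      intro n
      have hstep' : f (n+1) = g (f n) := by
        simp only [hfdef, Function.iterate_succ_apply']
      rw [hstep']
      exact hg (f n)
    obtain ⟨i, j, hij, hfij⟩ := Finite.exists_ne_map_eq_of_infinite f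
    have hex : ∃ m, ∃ i, i < m ∧ f i = f m := by
      rcases Nat.lt_or_ge i j with h' | h'
      · exact ⟨j, i, h', hfij⟩
      · exact ⟨i, j, lt_of_le_of_ne h' (Ne.symm hij), hfij.symm⟩
    obtain ⟨i0, hi0, hfi0⟩ := Nat.find_spec hex
    have hmin : ∀ k, k < Nat.find hex → ¬ ∃ i, i < k ∧ f i = f k :=
      fun k hk => Nat.find_min hex hk
    set m := Nat.find hex with hm
    set n := m - i0 with hn
    have hn0 : 0 < n := by omega
    haveI : NeZero n := ⟨hn0.ne'⟩
    apply hAcyc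
    refine ⟨n, fun k => (f (i0 + k.val)).1, hn0, ?_, ?_⟩
    · intro k l hkl
      have hk := ZMod.val_lt k
      have hl := ZMod.val_lt l
      have heq : f (i0 + k.val) = f (i0 + l.val) := Subtype.ext hkl
      by_contra hne
      have hvne : k.val ≠ l.val := fun hh => hne (ZMod.val_injective n hh)
      rcases Nat.lt_or_ge k.val l.val with h' | h'
      · exact hmin (i0 + l.val) (by omega) ⟨i0 + k.val, by omega, heq⟩
      · have h'' : l.val < k.val := by omega
        exact hmin (i0 + k.val) (by omega) ⟨i0 + l.val, by omega, heq.symm⟩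
    · intro k
      have hkv := ZMod.val_lt k
      have hval : (k + 1).val = (k.val + 1) % n := by
        rw [ZMod.val_add, ZMod.val_one_eq_one_mod]
        conv_rhs => rw [Nat.add_mod]
        rw [Nat.mod_eq_of_lt hkv]
      have hkey : (f (i0 + (k + 1).val)).1 = (f (i0 + k.val + 1)).1 := by
        rcases Nat.lt_or_ge (k.val + 1) n with h' | h'
        · rw [hval, Nat.mod_eq_of_lt h', Nat.add_assoc]
        · have h'' : k.val + 1 = n := by omega
          rw [hval, h'', Nat.mod_self, Nat.add_zero]
          have hmm : i0 + k.val + 1 = m := by omega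
          rw [hmm, hfi0]
      simp only
      rw [hkey]
      exact (hf (i0 + k.val)).1
  funext u v
  apply propext
  constructor
  · intro hu
    rcases hTot' u v (hPO u v hu).1 with h' | h'
    · exact h'
    · exact absurd ⟨hu, h'⟩ (hnoR u v)
  · intro hu
    rcases hTot u v (hPO' u v hu).1 with h' | h'
    · exact h'
    · exact absurd ⟨h', hu⟩ (hnoR v u)

end Soap
end
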